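/- arXiv:2205.10090 — 4 statements merged into one kernel-verified Lean document; each statement's English description precedes it below -/
import Mathlib

section
/- Let n ≥ 2 and let f_1, …, f_n : [a,b] → 𝔽 all be g-differentiable at t ∈ [a,b]. Then the product ∏_{j=1}^n f_j is g-differentiable at t and (∏_{j=1}^n f_j)'_g(t) = Σ_{σ∈F_{n,1}} ∏_{j=1}^n (f_j)^{(σ_j)}_g(t*) + Σ_{k=1}^{n−1} (Δg(t*))^k Σ_{σ∈F_{n,k+1}} ∏_{j=1}^n (f_j)^{(σ_j)}_g(t*), where F_{n,k} = {σ ∈ {0,1}^n : σ has exactly k entries equal to 1}, f^{(0)} = f and f^{(1)} = f'_g. -/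
/-!
With `h = g s - g t*` and `q j = h⁻¹ • (f j s - f j t*)`, for `h ≠ 0` each `f j s` equals
`f j t* + h • q j`, so expanding `∏ j, (f j t* + h • q j)` in powers of `h` writes the difference
quotient of the product as a polynomial in `h` and the `q j`; for `h = 0` both vanish. Along the
filter defining the derivative at `t*`, `h` tends to the jump `Δg(t*)` (monotonicity from the
right, left-continuity and `b ∉ D_g` from the left) and `q j` tends to `(f j)'_g(t*)`; continuity
of the polynomial gives the limit.
-/

open Set Filter Topology
open scoped Classical

noncomputable section

/-- The right-hand limit `g(t⁺)` of a nondecreasing function `g`. -/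
def rLim (g : ℝ → ℝ) (t : ℝ) : ℝ := sInf (g '' Set.Ioi t)

/-- `Δg(t) = g(t⁺) − g(t)`. -/
def jump (g : ℝ → ℝ) (t : ℝ) : ℝ := rLim g t - g t

/-- `C_g`: the set of points near which `g` is constant. -/
def Cset (g : ℝ → ℝ) : Set ℝ :=
  {t | ∃ ε > 0, ∀ u ∈ Set.Ioo (t - ε) (t + ε), g u = g t}

/-- `D_g`: the set of discontinuity points of `g`. -/
def Dset (g : ℝ → ℝ) : Set ℝ := {t | 0 < jump g t}

/-- The right endpoints `b_n` of the connected components of the open set `C_g`. -/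
def rightEndpoints (g : ℝ → ℝ) : Set ℝ :=
  {x | x ∉ Cset g ∧ ∃ s, s < x ∧ Set.Ioo s x ⊆ Cset g}

/-- The left endpoints `a_n` of the connected components of the open set `C_g`. -/
def leftEndpoints (g : ℝ → ℝ) : Set ℝ :=
  {x | x ∉ Cset g ∧ ∃ s, x < s ∧ Set.Ioo x s ⊆ Cset g}

/-- `N_g⁻ = {a_n : n ∈ Λ} \ D_g`. -/
def Nminus (g : ℝ → ℝ) : Set ℝ := leftEndpoints g \ Dset g

/-- `N_g⁺ = {b_n : n ∈ Λ} \ D_g`. -/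
def Nplus (g : ℝ → ℝ) : Set ℝ := rightEndpoints g \ Dset g

/-- `N_g = N_g⁻ ∪ N_g⁺`. -/
def Nset (g : ℝ → ℝ) : Set ℝ := Nminus g ∪ Nplus g

/-- `t* = t` if `t ∉ C_g`, and `t* = b_n` (the right endpoint of the connected component
`(a_n, b_n)` of `C_g` containing `t`) if `t ∈ C_g`. -/
def tstar (g : ℝ → ℝ) (t : ℝ) : ℝ :=
  if t ∈ Cset g then sSup (connectedComponentIn (Cset g) t) else t

/-- The filter along which the Stieltjes difference quotient is taken at a point of `[a,b]`:
from the right at points of `D_g ∪ N_g⁺ ∪ {a}`, from the left at points of `N_g⁻ ∪ {b}`,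
two-sided otherwise. -/
def sFilter (g : ℝ → ℝ) (a b t : ℝ) : Filter ℝ :=
  if t ∈ Dset g ∨ t ∈ Nplus g ∨ t = a then 𝓝[Set.Ioi t ∩ Set.Icc a b] t
  else if t ∈ Nminus g ∨ t = b then 𝓝[Set.Iio t ∩ Set.Icc a b] t
  else 𝓝[Set.Icc a b \ {t}] t

/-- `f` has Stieltjes derivative (`g`-derivative) `L` at `t`, relative to `[a,b]`. -/
def HasSDerivAt {K : Type*} [RCLike K] (g : ℝ → ℝ) (a b : ℝ) (f : ℝ → K) (t : ℝ) (L : K) :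
    Prop :=
  Filter.Tendsto (fun s => (g s - g (tstar g t))⁻¹ • (f s - f (tstar g t)))
    (sFilter g a b (tstar g t)) (𝓝 L)

/-- `f` is `g`-differentiable at `t`, relative to `[a,b]`. -/
def SDiffAt {K : Type*} [RCLike K] (g : ℝ → ℝ) (a b : ℝ) (f : ℝ → K) (t : ℝ) : Prop :=
  ∃ L, HasSDerivAt g a b f t L

/-- `f` is `g`-continuous at `t` relative to the domain `D`. -/
def GContAt {K : Type*} [RCLike K] (g : ℝ → ℝ) (f : ℝ → K) (D : Set ℝ) (t : ℝ) : Prop :=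
  ∀ ε > 0, ∃ δ > 0, ∀ s ∈ D, |g t - g s| < δ → ‖f t - f s‖ < ε

/-- `D₁`: points of `[a,b] ∩ N_g⁻` accumulating `D_g ∩ [a,t)`. -/
def D1 (g : ℝ → ℝ) (a b : ℝ) : Set ℝ :=
  {x | x ∈ Set.Icc a b ∩ Nminus g ∧ AccPt x (𝓟 (Dset g ∩ Set.Ico a x))}

/-- `D₂`: points of `[a,b] ∩ N_g⁺` accumulating `D_g ∩ (t,b]`. -/
def D2 (g : ℝ → ℝ) (a b : ℝ) : Set ℝ :=
  {x | x ∈ Set.Icc a b ∩ Nplus g ∧ AccPt x (𝓟 (Dset g ∩ Set.Ioc x b))}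

/-- `D₃`: points of `[a,b] \ (N_g ∪ D_g)` accumulating `D_g ∩ [a,b]`. -/
def D3 (g : ℝ → ℝ) (a b : ℝ) : Set ℝ :=
  {x | x ∈ Set.Icc a b \ (Nset g ∪ Dset g) ∧ AccPt x (𝓟 (Dset g ∩ Set.Icc a b))}

/-- `D̃₁`: points of `[a,b] ∩ N_g⁻` not accumulating `D_g ∩ [a,t)`. -/
def Dt1 (g : ℝ → ℝ) (a b : ℝ) : Set ℝ :=
  {x | x ∈ Set.Icc a b ∩ Nminus g ∧ ¬ AccPt x (𝓟 (Dset g ∩ Set.Ico a x))}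

/-- `D̃₂`: points of `[a,b] ∩ (N_g⁺ ∪ D_g)` not accumulating `D_g ∩ (t,b]`. -/
def Dt2 (g : ℝ → ℝ) (a b : ℝ) : Set ℝ :=
  {x | x ∈ Set.Icc a b ∩ (Nplus g ∪ Dset g) ∧ ¬ AccPt x (𝓟 (Dset g ∩ Set.Ioc x b))}

/-- `D̃₃`: points of `[a,b] \ (C_g ∪ N_g ∪ D_g)` not accumulating `D_g ∩ [a,b]`. -/
def Dt3 (g : ℝ → ℝ) (a b : ℝ) : Set ℝ :=
  {x | x ∈ Set.Icc a b \ (Cset g ∪ Nset g ∪ Dset g) ∧ ¬ AccPt x (𝓟 (Dset g ∩ Set.Icc a b))}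

/-- `C₁`: points of `[a,b] ∩ N_g⁻` accumulating `C_g ∩ [a,t)`. -/
def C1 (g : ℝ → ℝ) (a b : ℝ) : Set ℝ :=
  {x | x ∈ Set.Icc a b ∩ Nminus g ∧ AccPt x (𝓟 (Cset g ∩ Set.Ico a x))}

/-- `C₂`: points of `[a,b] ∩ (N_g⁺ ∪ D_g)` accumulating `C_g ∩ (t,b]`. -/
def C2 (g : ℝ → ℝ) (a b : ℝ) : Set ℝ :=
  {x | x ∈ Set.Icc a b ∩ (Nplus g ∪ Dset g) ∧ AccPt x (𝓟 (Cset g ∩ Set.Ioc x b))}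

/-- `C₃`: points of `[a,b] \ (C_g ∪ N_g ∪ D_g)` accumulating `C_g ∩ [a,b]`. -/
def C3 (g : ℝ → ℝ) (a b : ℝ) : Set ℝ :=
  {x | x ∈ Set.Icc a b \ (Cset g ∪ Nset g ∪ Dset g) ∧ AccPt x (𝓟 (Cset g ∩ Set.Icc a b))}

/-- `A_g = {t : sup{s ∈ [a,b] : g(s) = g(t)} ∈ D_g}`. -/
def Ag (g : ℝ → ℝ) (a b : ℝ) : Set ℝ :=
  {t | sSup {s | s ∈ Set.Icc a b ∧ g s = g t} ∈ Dset g}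

/-- `H_g`: points lying in some `(s₁, s₂]` with `s₁, s₂ ∈ D_g` and `(s₁, s₂) ⊆ C_g`. -/
def Hg (g : ℝ → ℝ) : Set ℝ :=
  {t | ∃ s₁ ∈ Dset g, ∃ s₂ ∈ Dset g, t ∈ Set.Ioc s₁ s₂ ∧ Set.Ioo s₁ s₂ ⊆ Cset g}

/-- Membership in `BC_g([a,b], K)`: bounded and `g`-continuous on `[a,b]`. -/
def MemBCg {K : Type*} [RCLike K] (g : ℝ → ℝ) (a b : ℝ) (f : ℝ → K) : Prop :=
  (∃ M, ∀ s ∈ Set.Icc a b, ‖f s‖ ≤ M) ∧ ∀ s ∈ Set.Icc a b, GContAt g f (Set.Icc a b) s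

/-- Membership in `BC¹_g([a,b], K)`. -/
def MemBC1g {K : Type*} [RCLike K] (g : ℝ → ℝ) (a b : ℝ) (f : ℝ → K) : Prop :=
  MemBCg g a b f ∧
    ∃ f' : ℝ → K, (∀ s ∈ Set.Icc a b, HasSDerivAt g a b f s (f' s)) ∧ MemBCg g a b f'


section StieltjesIncrement

variable {g : ℝ → ℝ}

theorem jump_nonneg (hg : Monotone g) (t : ℝ) : 0 ≤ jump g t :=
  sub_nonneg.2 <| le_csInf (nonempty_Ioi.image g) (by rintro _ ⟨s, hs, rfl⟩; exact hg hs.le)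

theorem jump_eq_zero_of_notMem_Dset (hg : Monotone g) {t : ℝ} (ht : t ∉ Dset g) :
    jump g t = 0 :=
  le_antisymm (not_lt.1 ht) (jump_nonneg hg t)

theorem continuousAt_of_notMem_Dset (hg : Monotone g)
    (hlc : ∀ x : ℝ, ContinuousWithinAt g (Iio x) x) {t : ℝ} (ht : t ∉ Dset g) :
    ContinuousAt g t := by
  have hright : Tendsto g (𝓝[>] t) (𝓝 (g t)) := by
    rw [← sub_eq_zero.1 (jump_eq_zero_of_notMem_Dset hg ht)]
    exact hg.tendsto_nhdsGT t
  rw [continuousAt_iff_continuous_left_right, continuousWithinAt_Iio_iff_Iic.symm,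
    continuousWithinAt_Ioi_iff_Ici.symm]
  exact ⟨hlc t, hright⟩

theorem tendsto_sub_sFilter (hg : Monotone g) (hlc : ∀ x : ℝ, ContinuousWithinAt g (Iio x) x)
    {a b : ℝ} (hb : b ∉ Dset g) (t : ℝ) :
    Tendsto (fun s => g s - g t) (sFilter g a b t) (𝓝 (jump g t)) := by
  have of_notMem (ht : t ∉ Dset g) (S : Set ℝ) :
      Tendsto (fun s => g s - g t) (𝓝[S] t) (𝓝 (jump g t)) := by
    rw [jump_eq_zero_of_notMem_Dset hg ht, ← sub_self (g t)]
    exact ((continuousAt_of_notMem_Dset hg hlc ht).tendsto.sub_const _).mono_left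
      nhdsWithin_le_nhds
  unfold sFilter
  split_ifs with hright hleft
  · exact ((hg.tendsto_nhdsGT t).mono_left (nhdsWithin_mono _ inter_subset_left)).sub_const _
  · exact of_notMem (by rcases hleft with h | rfl; exacts [h.2, hb]) _
  · exact of_notMem (fun h => hright (.inl h)) _

end StieltjesIncrement

open Finset

section ProdAddCoeff

variable {ι 𝕜 A : Type*} [Fintype ι] [DecidableEq ι]

/-- The coefficient of `h ^ m` in `∏ j, (c j + h • q j)`. -/
def prodAddCoeff [CommSemiring A] (m : ℕ) (q c : ι → A) : A :=
  ∑ S ∈ powersetCard m univ, ∏ j, if j ∈ S then q j else c j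

theorem prod_add_smul_eq_sum_prodAddCoeff [CommSemiring 𝕜] [CommSemiring A] [Algebra 𝕜 A]
    (h : 𝕜) (q c : ι → A) :
    ∏ j, (c j + h • q j) = ∑ m ∈ range (Fintype.card ι + 1), h ^ m • prodAddCoeff m q c := by
  simp_rw [add_comm (c _), Finset.prod_add, Finset.sum_powerset, card_univ, prodAddCoeff,
    Finset.smul_sum]
  refine sum_congr rfl fun m _ => sum_congr rfl fun S hS => ?_
  rw [← (mem_powersetCard.1 hS).2, ← smul_prod, smul_mul_assoc, prod_ite, filter_mem_eq_inter,
    Finset.univ_inter, sdiff_eq_filter]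

theorem inv_smul_prod_sub_prod [Field 𝕜] [CommRing A] [Algebra 𝕜 A] (h : 𝕜) (x c : ι → A) :
    h⁻¹ • (∏ j, x j - ∏ j, c j) =
      prodAddCoeff 1 (fun j => h⁻¹ • (x j - c j)) c +
        ∑ k ∈ Ico 1 (Fintype.card ι),
          h ^ k • prodAddCoeff (k + 1) (fun j => h⁻¹ • (x j - c j)) c := by
  set q : ι → A := fun j => h⁻¹ • (x j - c j)
  rcases eq_or_ne h 0 with rfl | hh
  · -- `0⁻¹ = 0` makes every `q j` vanish, so both sides are `0`.
    have hcoeff (m : ℕ) (hm : m ≠ 0) : prodAddCoeff m q c = 0 :=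
      sum_eq_zero fun S hS => by
        obtain ⟨j, hj⟩ := card_pos.1 ((mem_powersetCard.1 hS).2 ▸ Nat.pos_of_ne_zero hm)
        exact prod_eq_zero (mem_univ j) (by simp [q, hj])
    simp [hcoeff]
  rcases (Fintype.card ι).eq_zero_or_pos with hι | hι
  · have : IsEmpty ι := Fintype.card_eq_zero_iff.1 hι
    simp [prodAddCoeff]
  have hx : x = fun j => c j + h • q j := by ext j; simp [q, smul_inv_smul₀ hh]
  have hcoeff_zero : prodAddCoeff 0 q c = ∏ j, c j := by simp [prodAddCoeff]
  rw [hx, prod_add_smul_eq_sum_prodAddCoeff, sum_range_succ', pow_zero, one_smul, hcoeff_zero,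
    add_sub_cancel_right, smul_sum, sum_range_eq_add_Ico _ hι]
  simp only [pow_succ', mul_smul, inv_smul_smul₀ hh, pow_zero, one_smul]

theorem continuous_prodAddCoeff [CommSemiring A] [TopologicalSpace A] [ContinuousAdd A]
    [ContinuousMul A] (m : ℕ) (c : ι → A) : Continuous fun q : ι → A => prodAddCoeff m q c :=
  continuous_finsetSum _ fun S _ => continuous_finsetProd _ fun j _ => by
    split_ifs
    exacts [continuous_apply j, continuous_const]

theorem tendsto_inv_smul_prod_sub_prod [Field 𝕜] [TopologicalSpace 𝕜] [IsTopologicalRing 𝕜]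
    [CommRing A] [Algebra 𝕜 A] [TopologicalSpace A] [IsTopologicalRing A] [ContinuousSMul 𝕜 A]
    {α : Type*} {l : Filter α} {D : α → 𝕜} {δ : 𝕜} {x : ι → α → A} {c L : ι → A}
    (hD : Tendsto D l (𝓝 δ))
    (hx : ∀ j, Tendsto (fun s => (D s)⁻¹ • (x j s - c j)) l (𝓝 (L j))) :
    Tendsto (fun s => (D s)⁻¹ • (∏ j, x j s - ∏ j, c j)) l
      (𝓝 (prodAddCoeff 1 L c +
        ∑ k ∈ Ico 1 (Fintype.card ι), δ ^ k • prodAddCoeff (k + 1) L c)) := by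
  have hcoeff (m : ℕ) := ((continuous_prodAddCoeff m c).tendsto L).comp (tendsto_pi_nhds.2 hx)
  simp_rw [inv_smul_prod_sub_prod]
  exact (hcoeff 1).add (tendsto_finsetSum _ fun k _ => (hD.pow k).smul (hcoeff (k + 1)))

end ProdAddCoeff

theorem stmt1_general {K : Type*} [RCLike K] (g : ℝ → ℝ) (hg : Monotone g)
    (hlc : ∀ x : ℝ, ContinuousWithinAt g (Set.Iio x) x)
    (a b : ℝ)
    (hb : b ∉ Dset g ∪ Cset g ∪ Nplus g)
    (n : ℕ) (f : Fin n → ℝ → K) (L : Fin n → K)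
    (t : ℝ)
    (hf : ∀ j, HasSDerivAt g a b (f j) t (L j)) :
    HasSDerivAt g a b (fun s => ∏ j, f j s) t
      ((∑ S ∈ Finset.powersetCard 1 (Finset.univ : Finset (Fin n)),
          ∏ j, (if j ∈ S then L j else f j (tstar g t))) +
        ∑ k ∈ Finset.Ico 1 n, (jump g (tstar g t)) ^ k •
          ∑ S ∈ Finset.powersetCard (k + 1) (Finset.univ : Finset (Fin n)),
            ∏ j, (if j ∈ S then L j else f j (tstar g t))) := by
  have hΔ := tendsto_sub_sFilter hg hlc (a := a) (fun h => hb (.inl (.inl h))) (tstar g t)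
  simpa only [HasSDerivAt, prodAddCoeff, Fintype.card_fin] using
    tendsto_inv_smul_prod_sub_prod hΔ hf

/-- Product rule for a finite number of `g`-differentiable functions. -/
theorem stmt1 {K : Type*} [RCLike K] (g : ℝ → ℝ) (hg : Monotone g)
    (hlc : ∀ x : ℝ, ContinuousWithinAt g (Set.Iio x) x)
    (a b : ℝ) (hab : a < b) (ha : a ∉ Nminus g)
    (hb : b ∉ Dset g ∪ Cset g ∪ Nplus g)
    (n : ℕ) (hn : 2 ≤ n) (f : Fin n → ℝ → K) (L : Fin n → K)
    (t : ℝ) (ht : t ∈ Set.Icc a b)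
    (hf : ∀ j, HasSDerivAt g a b (f j) t (L j)) :
    HasSDerivAt g a b (fun s => ∏ j, f j s) t
      ((∑ S ∈ Finset.powersetCard 1 (Finset.univ : Finset (Fin n)),
          ∏ j, (if j ∈ S then L j else f j (tstar g t))) +
        ∑ k ∈ Finset.Ico 1 n, (jump g (tstar g t)) ^ k •
          ∑ S ∈ Finset.powersetCard (k + 1) (Finset.univ : Finset (Fin n)),
            ∏ j, (if j ∈ S then L j else f j (tstar g t))) :=
  stmt1_general g hg hlc a b hb n f L t hf
end
end

section
/- For each t ∈ ℝ, the left-hand limit and the right-hand limit of Δg at t are both 0, i.e. lim_{s→t⁻} Δg(s) = lim_{s→t⁺} Δg(s) = 0. In particular, Δg : ℝ → ℝ is a regulated function and is Borel-measurable. -/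
open Set Filter Topology
open scoped Classical

noncomputable section

/-- The lateral limits of `Δg` vanish everywhere; in particular `Δg` is regulated
(it has one-sided limits at every point) and Borel measurable. -/
theorem stmt4 (g : ℝ → ℝ) (hg : Monotone g)
    (hlc : ∀ x : ℝ, ContinuousWithinAt g (Set.Iio x) x) :
    (∀ t : ℝ, Filter.Tendsto (jump g) (𝓝[<] t) (𝓝 0) ∧
      Filter.Tendsto (jump g) (𝓝[>] t) (𝓝 0)) ∧
    Measurable (jump g) := by
  have hbl : ∀ s : ℝ, BddBelow (g '' Set.Ioi s) := fun s =>
    ⟨g s, by rintro _ ⟨u, hu, rfl⟩; exact hg hu.le⟩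
  have hne : ∀ s : ℝ, (g '' Set.Ioi s).Nonempty := fun s =>
    ⟨g (s + 1), ⟨s + 1, by simp, rfl⟩⟩
  have hle : ∀ s u : ℝ, s < u → rLim g s ≤ g u := fun s u h =>
    csInf_le (hbl s) ⟨u, h, rfl⟩
  have hge : ∀ s : ℝ, g s ≤ rLim g s := fun s =>
    le_csInf (hne s) (by rintro _ ⟨u, hu, rfl⟩; exact hg hu.le)
  constructor
  · intro t
    constructor
    · rw [NormedAddCommGroup.tendsto_nhds_zero]
      intro ε hε
      have h2 : ∀ᶠ s in 𝓝[<] t, g t - ε < g s :=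
        (hlc t).eventually (eventually_gt_nhds (by linarith))
      filter_upwards [h2, self_mem_nhdsWithin] with s hs hst
      have h3 := hle s t hst
      have h4 := hge s
      rw [Real.norm_eq_abs, abs_of_nonneg (by unfold jump; linarith)]
      unfold jump; linarith
    · rw [NormedAddCommGroup.tendsto_nhds_zero]
      intro ε hε
      obtain ⟨y, ⟨u, hu, rfl⟩, hylt⟩ :=
        exists_lt_of_csInf_lt (hne t) (show sInf (g '' Set.Ioi t) < rLim g t + ε by
          unfold rLim; linarith)
      filter_upwards [Ioo_mem_nhdsGT_of_mem (Set.mem_Ico.mpr ⟨le_refl t, hu⟩)] with s hs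
      have h3 := hle s u hs.2
      have h4 := hge s
      have h5 := hle t s hs.1
      rw [Real.norm_eq_abs, abs_of_nonneg (by unfold jump; linarith)]
      unfold jump; linarith
  · have hmono : Monotone (rLim g) := by
      intro s t hst
      refine le_csInf (hne t) ?_
      rintro _ ⟨u, hu, rfl⟩
      exact csInf_le (hbl s) ⟨u, lt_of_le_of_lt hst hu, rfl⟩
    exact hmono.measurable.sub hg.measurable
end
end

section
/- If f : [a,b] → 𝔽 is g-continuous at t ∈ [a,b], then the map f* : [a,b] → 𝔽 defined by f*(t) = f(t*) is also g-continuous at t. -/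
open Set Filter Topology
open scoped Classical

noncomputable section

lemma ioo_subset_cset {g : ℝ → ℝ} {t ε : ℝ} (hε : 0 < ε)
    (h : ∀ u ∈ Set.Ioo (t - ε) (t + ε), g u = g t) :
    Set.Ioo (t - ε) (t + ε) ⊆ Cset g := by
  intro u hu
  refine ⟨min (u - (t - ε)) (t + ε - u),
    lt_min (by linarith [hu.1]) (by linarith [hu.2]), fun v hv => ?_⟩
  have h1 : min (u - (t - ε)) (t + ε - u) ≤ u - (t - ε) := min_le_left _ _
  have h2 : min (u - (t - ε)) (t + ε - u) ≤ t + ε - u := min_le_right _ _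
  have hv' : v ∈ Set.Ioo (t - ε) (t + ε) := ⟨by linarith [hv.1], by linarith [hv.2]⟩
  rw [h v hv', h u hu]

lemma gconst_of_icc {g : ℝ → ℝ} {s x : ℝ} (hsx : s ≤ x)
    (h : Set.Icc s x ⊆ Cset g) : g x = g s := by
  set S := {u | u ∈ Set.Icc s x ∧ g u = g s} with hS
  have hne : s ∈ S := ⟨⟨le_refl s, hsx⟩, rfl⟩
  have hbdd : BddAbove S := ⟨x, fun u hu => hu.1.2⟩
  set c := sSup S with hc
  have hcx : c ≤ x := csSup_le ⟨s, hne⟩ (fun u hu => hu.1.2)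
  have hsc : s ≤ c := le_csSup hbdd hne
  obtain ⟨ε, hε, hconst⟩ := h ⟨hsc, hcx⟩
  have hgc : g c = g s := by
    obtain ⟨u, huS, hu⟩ := exists_lt_of_lt_csSup ⟨s, hne⟩ (by linarith : c - ε < c)
    have huc : u ≤ c := le_csSup hbdd huS
    have := hconst u ⟨by linarith, by linarith⟩
    rw [← huS.2, this]
  have hcx2 : ¬ c < x := by
    intro hlt
    set u := min x (c + ε / 2) with hu
    have hu1 : c < u := lt_min hlt (by linarith)
    have hux : u ≤ x := min_le_left _ _
    have hu2 : u ≤ c + ε / 2 := min_le_right _ _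
    have huS : u ∈ S := ⟨⟨le_trans hsc hu1.le, hux⟩,
      by rw [hconst u ⟨by linarith, by linarith⟩, hgc]⟩
    exact absurd (le_csSup hbdd huS) (not_le.2 hu1)
  have hcex : c = x := le_antisymm hcx (not_lt.1 hcx2)
  rw [← hcex, hgc]

lemma tstar_spec (g : ℝ → ℝ) (hlc : ∀ x : ℝ, ContinuousWithinAt g (Set.Iio x) x)
    (a b : ℝ) (hbC : b ∉ Cset g) {s : ℝ} (hs : s ∈ Set.Icc a b) :
    tstar g s ∈ Set.Icc a b ∧ g (tstar g s) = g s := by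
  unfold tstar
  split_ifs with hsC
  · set C := connectedComponentIn (Cset g) s with hC
    have hsC' : s ∈ C := mem_connectedComponentIn hsC
    have hCsub : C ⊆ Cset g := connectedComponentIn_subset _ _
    have hCconn : IsPreconnected C :=
      (isConnected_connectedComponentIn_iff.2 hsC).isPreconnected
    have hOrd : Set.OrdConnected C := hCconn.ordConnected
    have hub : ∀ u ∈ C, u ≤ b := by
      intro u hu
      by_contra hub
      push_neg at hub
      exact hbC (hCsub (hOrd.out hsC' hu ⟨hs.2, hub.le⟩))
    have hbdd : BddAbove C := ⟨b, hub⟩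
    set M := sSup C with hM
    have hsM : s ≤ M := le_csSup hbdd hsC'
    have hMb : M ≤ b := csSup_le ⟨s, hsC'⟩ hub
    refine ⟨⟨le_trans hs.1 hsM, hMb⟩, ?_⟩
    obtain ⟨ε, hε, hconst⟩ := hsC
    have hsub : Set.Ioo (s - ε) (s + ε) ⊆ C :=
      isPreconnected_Ioo.subset_connectedComponentIn
        ⟨by linarith, by linarith⟩ (ioo_subset_cset hε hconst)
    have hsM' : s < M :=
      lt_of_lt_of_le (by linarith : s < s + ε / 2)
        (le_csSup hbdd (hsub ⟨by linarith, by linarith⟩))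
    have hgconst : ∀ u ∈ Set.Ioo s M, g u = g s := by
      intro u hu
      obtain ⟨v, hvC, hv⟩ := exists_lt_of_lt_csSup ⟨s, hsC'⟩ hu.2
      have huC : Set.Icc s u ⊆ C := by
        intro w hw
        exact hOrd.out hsC' hvC ⟨hw.1, le_trans hw.2 hv.le⟩
      exact gconst_of_icc hu.1.le (fun w hw => hCsub (huC hw))
    have h1 : Filter.Tendsto g (𝓝[Set.Iio M] M) (𝓝 (g M)) := hlc M
    have h2 : Filter.Tendsto g (𝓝[Set.Iio M] M) (𝓝 (g s)) := by
      apply Filter.Tendsto.congr' _ tendsto_const_nhds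
      filter_upwards [Ioo_mem_nhdsLT_of_mem ⟨hsM', le_refl M⟩] with u hu
      exact (hgconst u hu).symm
    exact tendsto_nhds_unique h1 h2
  · exact ⟨hs, rfl⟩

/-- If `f` is `g`-continuous at `t`, so is `f* : s ↦ f(s*)`. -/
theorem stmt14 {K : Type*} [RCLike K] (g : ℝ → ℝ) (hg : Monotone g)
    (hlc : ∀ x : ℝ, ContinuousWithinAt g (Set.Iio x) x)
    (a b : ℝ) (hab : a < b) (ha : a ∉ Nminus g)
    (hb : b ∉ Dset g ∪ Cset g ∪ Nplus g)
    (f : ℝ → K) (t : ℝ) (ht : t ∈ Set.Icc a b)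
    (hf : GContAt g f (Set.Icc a b) t) :
    GContAt g (fun s => f (tstar g s)) (Set.Icc a b) t := by
  intro ε hε
  obtain ⟨δ, hδ, hδε⟩ := hf (ε / 2) (by linarith)
  refine ⟨δ, hδ, fun s hs hgs => ?_⟩
  have hbC : b ∉ Cset g := fun h => hb (Or.inl (Or.inr h))
  obtain ⟨htmem, htg⟩ := tstar_spec g hlc a b hbC ht
  obtain ⟨hsmem, hsg⟩ := tstar_spec g hlc a b hbC hs
  have h1 : ‖f t - f (tstar g t)‖ < ε / 2 := by
    apply hδε _ htmem
    rw [htg, sub_self, abs_zero]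
    exact hδ
  have h2 : ‖f t - f (tstar g s)‖ < ε / 2 := by
    apply hδε _ hsmem
    rw [hsg]
    exact hgs
  have heq : f (tstar g t) - f (tstar g s)
      = (f t - f (tstar g s)) - (f t - f (tstar g t)) := by ring
  calc ‖f (tstar g t) - f (tstar g s)‖
      ≤ ‖f t - f (tstar g s)‖ + ‖f t - f (tstar g t)‖ := by
        rw [heq]; exact norm_sub_le _ _
    _ < ε := by linarith
end
end

section
/- Let f : [a,b] → 𝔽 and define f* : [a,b] → 𝔽 by f*(t) = f(t*). Assume f* is g-continuous on [a,b]. Then f is g-continuous on [a,b] if and only if f(t) = f(s) for every t, s ∈ [a,b] such that g(t) = g(s). -/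
open Set Filter Topology
open scoped Classical

noncomputable section

lemma isOpen_Cset (g : ℝ → ℝ) : IsOpen (Cset g) := by
  rw [Metric.isOpen_iff]
  rintro t ⟨ε, hε, hconst⟩
  refine ⟨ε, hε, fun u hu => ?_⟩
  rw [Metric.mem_ball, Real.dist_eq, abs_lt] at hu
  refine ⟨min (u - (t - ε)) ((t + ε) - u), lt_min (by linarith [hu.1]) (by linarith [hu.2]), ?_⟩
  intro v hv
  have hv1 : t - ε < v := by
    have := hv.1
    have h1 : u - min (u - (t - ε)) ((t + ε) - u) ≥ u - (u - (t - ε)) := by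
      have := min_le_left (u - (t - ε)) ((t + ε) - u); linarith
    linarith
  have hv2 : v < t + ε := by
    have := hv.2
    have h1 : u + min (u - (t - ε)) ((t + ε) - u) ≤ u + ((t + ε) - u) := by
      have := min_le_right (u - (t - ε)) ((t + ε) - u); linarith
    linarith
  rw [hconst v ⟨hv1, hv2⟩, hconst u ⟨by linarith [hu.1], by linarith [hu.2]⟩]

/-- g is constant on intervals contained in `Cset g`. -/
lemma const_on_Cset (g : ℝ → ℝ) {t s : ℝ} (hts : t ≤ s)
    (hsub : Set.Icc t s ⊆ Cset g) : g s = g t := by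
  set T : Set ℝ := {u | u ∈ Set.Icc t s ∧ g u = g t} with hT
  have htT : t ∈ T := ⟨⟨le_rfl, hts⟩, rfl⟩
  have hbdd : BddAbove T := ⟨s, fun u hu => hu.1.2⟩
  set m : ℝ := sSup T with hm
  have hmle : m ≤ s := csSup_le ⟨t, htT⟩ (fun u hu => hu.1.2)
  have htm : t ≤ m := le_csSup hbdd htT
  obtain ⟨ε, hε, hconst⟩ := hsub ⟨htm, hmle⟩
  obtain ⟨u, huT, hu⟩ := exists_lt_of_lt_csSup ⟨t, htT⟩ (by linarith : m - ε < m)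
  have hum : u ≤ m := le_csSup hbdd huT
  have hgm : g m = g t := by
    rw [← huT.2]; exact (hconst u ⟨hu, by linarith⟩).symm
  rcases eq_or_lt_of_le hmle with h | h
  · rw [← h]; exact hgm
  · exfalso
    set v : ℝ := min s (m + ε / 2) with hv
    have hmv : m < v := lt_min h (by linarith)
    have hvT : v ∈ T := by
      refine ⟨⟨le_trans htm hmv.le, min_le_left _ _⟩, ?_⟩
      rw [← hgm]
      exact hconst v ⟨by linarith, lt_of_le_of_lt (min_le_right _ _) (by linarith)⟩
    exact absurd (le_csSup hbdd hvT) (not_le.mpr hmv)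

lemma tstar_key (g : ℝ → ℝ) (hlc : ∀ x : ℝ, ContinuousWithinAt g (Set.Iio x) x)
    {a b t : ℝ} (hb : b ∉ Cset g) (ht : t ∈ Set.Icc a b) :
    tstar g t ∈ Set.Icc a b ∧ g (tstar g t) = g t := by
  unfold tstar
  split_ifs with h
  · set S := connectedComponentIn (Cset g) t with hS
    have tS : t ∈ S := mem_connectedComponentIn h
    have hSsub : S ⊆ Cset g := connectedComponentIn_subset _ _
    have hSopen : IsOpen S := (isOpen_Cset g).connectedComponentIn
    have hSord : S.OrdConnected := (isPreconnected_connectedComponentIn).ordConnected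
    have hbound : ∀ x ∈ S, x ≤ b := by
      intro x hx
      by_contra hxb
      push_neg at hxb
      exact hb (hSsub (hSord.out tS hx ⟨ht.2, hxb.le⟩))
    have hbdd : BddAbove S := ⟨b, hbound⟩
    have htc : t ≤ sSup S := le_csSup hbdd tS
    have hcb : sSup S ≤ b := csSup_le ⟨t, tS⟩ hbound
    obtain ⟨ε, hε, hball⟩ := Metric.isOpen_iff.mp hSopen t tS
    have htc' : t < sSup S := by
      have : t + ε / 2 ∈ S := hball (by
        rw [Metric.mem_ball, Real.dist_eq]
        rw [abs_of_nonneg (by linarith)]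
        linarith)
      have := le_csSup hbdd this
      linarith
    refine ⟨⟨le_trans ht.1 htc, hcb⟩, ?_⟩
    -- g is eventually g t on the left of sSup S
    have hmemS : ∀ u ∈ Set.Ioo t (sSup S), u ∈ S := by
      intro u hu
      obtain ⟨x, hxS, hux⟩ := exists_lt_of_lt_csSup ⟨t, tS⟩ hu.2
      exact hSord.out tS hxS ⟨hu.1.le, hux.le⟩
    have hgu : ∀ u ∈ Set.Ioo t (sSup S), g u = g t := by
      intro u hu
      refine const_on_Cset g hu.1.le (fun v hv => hSsub ?_)
      exact hSord.out tS (hmemS u hu) hv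
    have h1 : Filter.Tendsto g (𝓝[Set.Iio (sSup S)] (sSup S)) (𝓝 (g (sSup S))) :=
      hlc (sSup S)
    have h2 : Filter.Tendsto g (𝓝[Set.Iio (sSup S)] (sSup S)) (𝓝 (g t)) := by
      have hev : ∀ᶠ u in 𝓝[Set.Iio (sSup S)] (sSup S), g u = g t := by
        filter_upwards [Ioo_mem_nhdsLT_of_mem ⟨htc', le_rfl⟩] with u hu
        exact hgu u hu
      exact Filter.Tendsto.congr' (Filter.EventuallyEq.symm hev) tendsto_const_nhds
    exact tendsto_nhds_unique h1 h2
  · exact ⟨ht, rfl⟩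

/-- If `f*` is `g`-continuous on `[a,b]`, then `f` is `g`-continuous on `[a,b]` iff `f`
identifies points with the same `g`-value. -/
theorem stmt15 {K : Type*} [RCLike K] (g : ℝ → ℝ) (hg : Monotone g)
    (hlc : ∀ x : ℝ, ContinuousWithinAt g (Set.Iio x) x)
    (a b : ℝ) (hab : a < b) (ha : a ∉ Nminus g)
    (hb : b ∉ Dset g ∪ Cset g ∪ Nplus g)
    (f : ℝ → K)
    (hstar : ∀ s ∈ Set.Icc a b, GContAt g (fun u => f (tstar g u)) (Set.Icc a b) s) :
    (∀ s ∈ Set.Icc a b, GContAt g f (Set.Icc a b) s) ↔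
      (∀ t ∈ Set.Icc a b, ∀ s ∈ Set.Icc a b, g t = g s → f t = f s) := by
  have hbC : b ∉ Cset g := fun h => hb (Or.inl (Or.inr h))
  constructor
  · intro hcont t ht s hs hgs
    by_contra hne
    have hpos : 0 < ‖f t - f s‖ := by
      rw [norm_pos_iff, sub_ne_zero]; exact fun h => hne h
    obtain ⟨δ, hδ, hδ'⟩ := hcont t ht ‖f t - f s‖ hpos
    exact absurd (hδ' s hs (by rw [hgs]; simpa using hδ)) (lt_irrefl _)
  · intro hid s hs
    have key : ∀ u ∈ Set.Icc a b, f (tstar g u) = f u := by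
      intro u hu
      obtain ⟨hmem, hgeq⟩ := tstar_key g hlc hbC hu
      exact hid (tstar g u) hmem u hu hgeq
    intro ε hε
    obtain ⟨δ, hδ, hδ'⟩ := hstar s hs ε hε
    refine ⟨δ, hδ, fun u hu hgu => ?_⟩
    have := hδ' u hu hgu
    simpa only [key s hs, key u hu] using this
end
end
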